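/- In the Zhang model with N = 2, E_c = ε = 1/3, the two avalanche maps have linear parts L₁₁ = (1/9)[[2,3],[2,3]] and L₁₂ = (2/27)[[2,3],[2,3]] (and symmetric for site 2); all images lie on the diagonal {x₁ = x₂}, and both maps restricted to the diagonal have the common fixed point P = (4/17, 4/17), which attracts every diagonal orbit. Hence the spatial attractor is the single point P. -/

import Mathlib

open Filter

/-- The avalanche return map for excitation of site 1 in the `N = 2` Zhang model
with `E_c = ε = 1/3`: the linear parts are `L₁₁ = (1/9)[[2,3],[2,3]]` on
`M₁₁ = {y ≤ -2x/3 + 1/3}` and `L₁₂ = (2/27)[[2,3],[2,3]]` on the complement,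
applied to `x + e₁`. -/
noncomputable def G1 (x : ℝ × ℝ) : ℝ × ℝ :=
  let y : ℝ × ℝ := (x.1 + 1, x.2)
  let s : ℝ := 2 * y.1 + 3 * y.2
  if x.2 ≤ -2 * x.1 / 3 + 1 / 3 then (s / 9, s / 9) else (2 * s / 27, 2 * s / 27)

/-- The avalanche return map for excitation of site 2, symmetric to `G1`. -/
noncomputable def G2 (x : ℝ × ℝ) : ℝ × ℝ :=
  let y : ℝ × ℝ := (x.1, x.2 + 1)
  let s : ℝ := 3 * y.1 + 2 * y.2
  if x.1 ≤ -2 * x.2 / 3 + 1 / 3 then (s / 9, s / 9) else (2 * s / 27, 2 * s / 27)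

/-- Random orbit of the skew-product dynamics determined by a sequence of excitations. -/
noncomputable def orbit (t : ℕ → Bool) (x : ℝ × ℝ) : ℕ → ℝ × ℝ
  | 0 => x
  | n + 1 => (if t n then G1 else G2) (orbit t x n)

/-!
Every avalanche map sends the closed quadrant into the diagonal, beyond the point `(1/5, 1/5)`
where the diagonal leaves `M₁₁`. On that ray both maps act by the same affine contraction
`a ↦ (10a + 4)/27` with ratio `10/27` and fixed point `4/17`, so after the first step every
orbit contracts geometrically to `P = (4/17, 4/17)`, whichever sites are excited.
-/

theorem tendsto_of_sub_eq_smul_sub {𝕜 E : Type*} [NormedField 𝕜] [NormedAddCommGroup E]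
    [NormedSpace 𝕜 E] {u : ℕ → E} {p : E} {k : 𝕜} (hk : ‖k‖ < 1)
    (h : ∀ n, u (n + 1) - p = k • (u n - p)) : Tendsto u atTop (nhds p) := by
  have hpow : ∀ n, u n = k ^ n • (u 0 - p) + p := by
    intro n
    induction n with
    | zero => simp
    | succ n ih => rw [← sub_eq_iff_eq_add, h, ih, add_sub_cancel_right, pow_succ', mul_smul]
  have hlim : Tendsto (fun n => k ^ n • (u 0 - p) + p) atTop (nhds ((0 : 𝕜) • (u 0 - p) + p)) :=
    ((tendsto_pow_atTop_nhds_zero_of_norm_lt_one hk).smul_const _).add_const p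
  rw [zero_smul, zero_add] at hlim
  simpa only [← hpow] using hlim

def diagRay : Set (ℝ × ℝ) := {x | x.1 = x.2 ∧ 1 / 5 < x.1}

lemma G1_fst_eq_snd (x : ℝ × ℝ) : (G1 x).1 = (G1 x).2 := by
  unfold G1; split <;> rfl

lemma G2_fst_eq_snd (x : ℝ × ℝ) : (G2 x).1 = (G2 x).2 := by
  unfold G2; split <;> rfl

lemma G1_mem_diagRay {x : ℝ × ℝ} (hx₁ : 0 ≤ x.1) (hx₂ : 0 ≤ x.2) : G1 x ∈ diagRay := by
  refine ⟨G1_fst_eq_snd x, ?_⟩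
  unfold G1
  split_ifs with h <;> dsimp only <;> linarith

lemma G2_mem_diagRay {x : ℝ × ℝ} (hx₁ : 0 ≤ x.1) (hx₂ : 0 ≤ x.2) : G2 x ∈ diagRay := by
  refine ⟨G2_fst_eq_snd x, ?_⟩
  unfold G2
  split_ifs with h <;> dsimp only <;> linarith

lemma G1_sub_eq_smul_sub {x : ℝ × ℝ} (hx : x ∈ diagRay) :
    G1 x - (4 / 17, 4 / 17) = (10 / 27 : ℝ) • (x - (4 / 17, 4 / 17)) := by
  obtain ⟨a, b⟩ := x
  obtain ⟨hab, ha⟩ := hx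
  dsimp only at hab ha
  subst hab
  unfold G1
  rw [if_neg (by dsimp only; linarith)]
  ext <;> simp only [Prod.fst_sub, Prod.snd_sub, Prod.smul_fst, Prod.smul_snd, smul_eq_mul] <;>
    ring

lemma G2_sub_eq_smul_sub {x : ℝ × ℝ} (hx : x ∈ diagRay) :
    G2 x - (4 / 17, 4 / 17) = (10 / 27 : ℝ) • (x - (4 / 17, 4 / 17)) := by
  obtain ⟨a, b⟩ := x
  obtain ⟨hab, ha⟩ := hx
  dsimp only at hab ha
  subst hab
  unfold G2
  rw [if_neg (by dsimp only; linarith)]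
  ext <;> simp only [Prod.fst_sub, Prod.snd_sub, Prod.smul_fst, Prod.smul_snd, smul_eq_mul] <;>
    ring

lemma avalanche_mem_diagRay (b : Bool) {x : ℝ × ℝ} (hx₁ : 0 ≤ x.1) (hx₂ : 0 ≤ x.2) :
    (if b then G1 else G2) x ∈ diagRay := by
  cases b
  · exact G2_mem_diagRay hx₁ hx₂
  · exact G1_mem_diagRay hx₁ hx₂

lemma avalanche_sub_eq_smul_sub (b : Bool) {x : ℝ × ℝ} (hx : x ∈ diagRay) :
    (if b then G1 else G2) x - (4 / 17, 4 / 17) = (10 / 27 : ℝ) • (x - (4 / 17, 4 / 17)) := by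
  cases b
  · exact G2_sub_eq_smul_sub hx
  · exact G1_sub_eq_smul_sub hx

lemma orbit_succ_mem_diagRay (t : ℕ → Bool) {x : ℝ × ℝ} (hx₁ : 0 ≤ x.1) (hx₂ : 0 ≤ x.2) :
    ∀ n, orbit t x (n + 1) ∈ diagRay
  | 0 => avalanche_mem_diagRay (t 0) hx₁ hx₂
  | n + 1 => by
    obtain ⟨hdiag, hpos⟩ := orbit_succ_mem_diagRay t hx₁ hx₂ n
    exact avalanche_mem_diagRay (t (n + 1)) (by linarith) (by linarith)

lemma tendsto_orbit {t : ℕ → Bool} {x : ℝ × ℝ} (hx₁ : 0 ≤ x.1) (hx₂ : 0 ≤ x.2) :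
    Tendsto (orbit t x) atTop (nhds ((4 / 17 : ℝ), (4 / 17 : ℝ))) := by
  refine (tendsto_add_atTop_iff_nat 1).1 (tendsto_of_sub_eq_smul_sub (k := (10 / 27 : ℝ))
    (by norm_num [abs_of_pos]) fun n => ?_)
  exact avalanche_sub_eq_smul_sub (t (n + 1)) (orbit_succ_mem_diagRay t hx₁ hx₂ n)

theorem zhang_third_third_point_attractor :
    (∀ x : ℝ × ℝ, (G1 x).1 = (G1 x).2 ∧ (G2 x).1 = (G2 x).2) ∧
      G1 (4/17, 4/17) = (4/17, 4/17) ∧ G2 (4/17, 4/17) = (4/17, 4/17) ∧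
      (∀ (t : ℕ → Bool) (x : ℝ × ℝ), x ∈ Set.Icc (0:ℝ) (1/3) ×ˢ Set.Icc (0:ℝ) (1/3) →
        Tendsto (orbit t x) atTop (nhds ((4/17 : ℝ), (4/17 : ℝ)))) := by
  have hP : ((4 / 17 : ℝ), (4 / 17 : ℝ)) ∈ diagRay := ⟨rfl, by norm_num⟩
  refine ⟨fun x => ⟨G1_fst_eq_snd x, G2_fst_eq_snd x⟩, ?_, ?_, ?_⟩
  · rw [← sub_eq_zero, G1_sub_eq_smul_sub hP, sub_self, smul_zero]
  · rw [← sub_eq_zero, G2_sub_eq_smul_sub hP, sub_self, smul_zero]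
  · rintro t x ⟨⟨hx₁, -⟩, hx₂, -⟩
    exact tendsto_orbit hx₁ hx₂
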